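/- arXiv:2604.02656 — 4 statements merged into one kernel-verified Lean document; each statement's English description precedes it below -/
import Mathlib

section
/- In the DR setup, suppose additionally that Y : Ω → ℝ is integrable, that μ0, μ1 : E → ℝ are measurable with μ0 ∘ X and μ1 ∘ X integrable, and that the conditional moment conditions E[A·Y | 𝒢] = (e·μ1) ∘ X and E[(1 − A)·Y | 𝒢] = ((1 − e)·μ0) ∘ X hold P-almost surely. Define the oracle doubly robust pseudo-outcome ψ⁰ := μ1(X) − μ0(X) + w(X, A)·(Y − A·μ1(X) − (1 − A)·μ0(X)), and assume ψ⁰ is integrable. Then E[ψ⁰ | 𝒢] = μ1 ∘ X − μ0 ∘ X, P-almost surely. (Conditional unbiasedness of the DR pseudo-outcome: its conditional expectation given the covariates equals the conditional average treatment effect τ(X) = μ1(X) − μ0(X).) -/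
open MeasureTheory

/-- Conditional unbiasedness of the oracle doubly robust pseudo-outcome: its
conditional expectation given the covariates equals the CATE
`τ(X) = μ1(X) − μ0(X)`. -/
theorem dr_pseudo_outcome_conditionally_unbiased
    {Ω : Type*} [MeasurableSpace Ω] (P : Measure Ω) [IsProbabilityMeasure P]
    {E : Type*} [mE : MeasurableSpace E]
    (X : Ω → E) (hX : Measurable X)
    (A : Ω → ℝ) (hA : Measurable A) (hA01 : ∀ ω, A ω = 0 ∨ A ω = 1)
    (ε : ℝ) (hε0 : 0 < ε) (hε12 : ε ≤ 1 / 2)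
    (e : E → ℝ) (he : Measurable e) (hebd : ∀ x, ε ≤ e x ∧ e x ≤ 1 - ε)
    (hcondA : P[A | mE.comap X] =ᵐ[P] fun ω => e (X ω))
    (Y : Ω → ℝ) (hY : Integrable Y P)
    (μ0 μ1 : E → ℝ) (hμ0 : Measurable μ0) (hμ1 : Measurable μ1)
    (hμ0i : Integrable (fun ω => μ0 (X ω)) P)
    (hμ1i : Integrable (fun ω => μ1 (X ω)) P)
    (hc1 : P[fun ω => A ω * Y ω | mE.comap X]
        =ᵐ[P] fun ω => e (X ω) * μ1 (X ω))
    (hc0 : P[fun ω => (1 - A ω) * Y ω | mE.comap X]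
        =ᵐ[P] fun ω => (1 - e (X ω)) * μ0 (X ω))
    (ψ : Ω → ℝ)
    (hψ : ∀ ω, ψ ω = μ1 (X ω) - μ0 (X ω) +
      ((A ω - e (X ω)) / (e (X ω) * (1 - e (X ω)))) *
        (Y ω - A ω * μ1 (X ω) - (1 - A ω) * μ0 (X ω)))
    (hψi : Integrable ψ P) :
    P[ψ | mE.comap X] =ᵐ[P] fun ω => μ1 (X ω) - μ0 (X ω) := by
  have hm : mE.comap X ≤ ‹MeasurableSpace Ω› := hX.comap_le
  have hXm : @Measurable Ω E (mE.comap X) mE X := fun s hs => ⟨s, hs, rfl⟩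
  -- basic bounds
  have hepos : ∀ x, 0 < e x := fun x => lt_of_lt_of_le hε0 (hebd x).1
  have h1epos : ∀ x, 0 < 1 - e x := fun x =>
    lt_of_lt_of_le hε0 (by linarith [(hebd x).2])
  have hene : ∀ x, e x ≠ 0 := fun x => ne_of_gt (hepos x)
  have h1ene : ∀ x, (1 : ℝ) - e x ≠ 0 := fun x => ne_of_gt (h1epos x)
  have hAbd : ∀ ω, ‖A ω‖ ≤ 1 := by
    intro ω; rcases hA01 ω with h | h <;> simp [h]
  have h1Abd : ∀ ω, ‖1 - A ω‖ ≤ 1 := by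
    intro ω; rcases hA01 ω with h | h <;> simp [h]
  -- the pieces
  set T0 : Ω → ℝ := fun ω => μ1 (X ω) - μ0 (X ω) with hT0
  set f1 : Ω → ℝ := fun ω => (e (X ω))⁻¹ with hf1
  set f2 : Ω → ℝ := fun ω => μ1 (X ω) / e (X ω) with hf2
  set f3 : Ω → ℝ := fun ω => (1 - e (X ω))⁻¹ with hf3
  set f4 : Ω → ℝ := fun ω => μ0 (X ω) / (1 - e (X ω)) with hf4
  set g1 : Ω → ℝ := fun ω => A ω * Y ω with hg1
  set g3 : Ω → ℝ := fun ω => (1 - A ω) * Y ω with hg3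
  set g4 : Ω → ℝ := fun ω => 1 - A ω with hg4
  -- measurability of covariate-level factors w.r.t. the comap σ-algebra
  have hf1m : StronglyMeasurable[mE.comap X] f1 :=
    ((he.comp hXm).inv).stronglyMeasurable
  have hf2m : StronglyMeasurable[mE.comap X] f2 :=
    ((hμ1.comp hXm).div (he.comp hXm)).stronglyMeasurable
  have hf3m : StronglyMeasurable[mE.comap X] f3 :=
    ((measurable_const.sub (he.comp hXm)).inv).stronglyMeasurable
  have hf4m : StronglyMeasurable[mE.comap X] f4 :=
    ((hμ0.comp hXm).div (measurable_const.sub (he.comp hXm))).stronglyMeasurable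
  have hT0m : StronglyMeasurable[mE.comap X] T0 :=
    ((hμ1.comp hXm).sub (hμ0.comp hXm)).stronglyMeasurable
  -- integrability
  have hAi : Integrable A P := by
    have := (integrable_const (1 : ℝ) (μ := P)).bdd_mul hA.aestronglyMeasurable (Filter.Eventually.of_forall hAbd)
    simpa using this
  have hg1i : Integrable g1 P :=
    hY.bdd_mul hA.aestronglyMeasurable (Filter.Eventually.of_forall hAbd)
  have hg3i : Integrable g3 P :=
    hY.bdd_mul (measurable_const.sub hA).aestronglyMeasurable (Filter.Eventually.of_forall h1Abd)
  have hg4i : Integrable g4 P := (integrable_const (1 : ℝ)).sub hAi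
  have hf1bd : ∀ ω, ‖f1 ω‖ ≤ ε⁻¹ := by
    intro ω
    rw [hf1, Real.norm_eq_abs, abs_of_pos (inv_pos.mpr (hepos (X ω)))]
    exact inv_anti₀ hε0 (hebd (X ω)).1
  have hf3bd : ∀ ω, ‖f3 ω‖ ≤ ε⁻¹ := by
    intro ω
    rw [hf3, Real.norm_eq_abs, abs_of_pos (inv_pos.mpr (h1epos (X ω)))]
    exact inv_anti₀ hε0 (by linarith [(hebd (X ω)).2])
  have hf1g1i : Integrable (f1 * g1) P :=
    hg1i.bdd_mul ((he.comp hX).inv).aestronglyMeasurable (Filter.Eventually.of_forall hf1bd)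
  have hf3g3i : Integrable (f3 * g3) P :=
    hg3i.bdd_mul ((measurable_const.sub (he.comp hX)).inv).aestronglyMeasurable (Filter.Eventually.of_forall hf3bd)
  have hf2Ai : Integrable (f2 * A) P := by
    have hb : ∀ ω, ‖A ω / e (X ω)‖ ≤ ε⁻¹ := by
      intro ω
      rw [norm_div]
      calc ‖A ω‖ / ‖e (X ω)‖ ≤ 1 / ε := by
            apply div_le_div₀ (by positivity) (hAbd ω) hε0
            rw [Real.norm_eq_abs, abs_of_pos (hepos (X ω))]; exact (hebd (X ω)).1
        _ = ε⁻¹ := one_div ε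
    have h := hμ1i.bdd_mul ((hA.div (he.comp hX))).aestronglyMeasurable (Filter.Eventually.of_forall hb)
    exact h.congr (Filter.Eventually.of_forall fun ω => by
      simp only [hf2, Pi.mul_apply, Pi.div_apply, Function.comp_apply]; ring)
  have hf4g4i : Integrable (f4 * g4) P := by
    have hb : ∀ ω, ‖(1 - A ω) / (1 - e (X ω))‖ ≤ ε⁻¹ := by
      intro ω
      rw [norm_div]
      calc ‖1 - A ω‖ / ‖1 - e (X ω)‖ ≤ 1 / ε := by
            apply div_le_div₀ (by positivity) (h1Abd ω) hε0
            rw [Real.norm_eq_abs, abs_of_pos (h1epos (X ω))]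
            linarith [(hebd (X ω)).2]
        _ = ε⁻¹ := one_div ε
    have h := hμ0i.bdd_mul
      (((measurable_const.sub hA).div (measurable_const.sub (he.comp hX)))).aestronglyMeasurable
      (Filter.Eventually.of_forall hb)
    exact h.congr (Filter.Eventually.of_forall fun ω => by
      simp only [hf4, hg4, Pi.mul_apply, Pi.div_apply, Pi.sub_apply, Function.comp_apply]; ring)
  have hT0i : Integrable T0 P := hμ1i.sub hμ0i
  -- pointwise decomposition of ψ
  have hψeq : ψ = T0 + f1 * g1 - f2 * A - f3 * g3 + f4 * g4 := by
    funext ω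
    simp only [Pi.add_apply, Pi.sub_apply, Pi.mul_apply, hT0, hf1, hf2, hf3, hf4,
      hg1, hg3, hg4, hψ ω]
    rcases hA01 ω with h | h <;> rw [h] <;>
      field_simp [hene (X ω), h1ene (X ω)] <;> ring
  -- conditional expectations of the pieces
  have hE0 : P[T0 | mE.comap X] =ᵐ[P] T0 :=
    Filter.EventuallyEq.of_eq (condExp_of_stronglyMeasurable hm hT0m hT0i)
  have hE1 : P[f1 * g1 | mE.comap X] =ᵐ[P] fun ω => μ1 (X ω) := by
    refine (condExp_mul_of_stronglyMeasurable_left hf1m hf1g1i hg1i).trans ?_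
    filter_upwards [hc1] with ω hω
    simp only [Pi.mul_apply, hf1]
    rw [show P[fun ω => A ω * Y ω|mE.comap X] = P[g1|mE.comap X] from rfl] at hω
    rw [hω]
    field_simp [hene (X ω)]
  have hE2 : P[f2 * A | mE.comap X] =ᵐ[P] fun ω => μ1 (X ω) := by
    refine (condExp_mul_of_stronglyMeasurable_left hf2m hf2Ai hAi).trans ?_
    filter_upwards [hcondA] with ω hω
    simp only [Pi.mul_apply, hf2]
    rw [hω]
    field_simp [hene (X ω)]
  have hE3 : P[f3 * g3 | mE.comap X] =ᵐ[P] fun ω => μ0 (X ω) := by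
    refine (condExp_mul_of_stronglyMeasurable_left hf3m hf3g3i hg3i).trans ?_
    filter_upwards [hc0] with ω hω
    simp only [Pi.mul_apply, hf3]
    rw [show P[fun ω => (1 - A ω) * Y ω|mE.comap X] = P[g3|mE.comap X] from rfl] at hω
    rw [hω]
    field_simp [h1ene (X ω)]
  have hEg4 : P[g4 | mE.comap X] =ᵐ[P] fun ω => 1 - e (X ω) := by
    have h := condExp_sub (m := mE.comap X) (μ := P) (integrable_const (1 : ℝ)) hAi
    have hone : P[(fun _ : Ω => (1 : ℝ)) | mE.comap X] = fun _ => (1 : ℝ) :=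
      condExp_const hm 1
    refine (Filter.EventuallyEq.trans ?_ h).trans ?_
    · rfl
    · filter_upwards [hcondA] with ω hω
      simp [hone, hω]
  have hE4 : P[f4 * g4 | mE.comap X] =ᵐ[P] fun ω => μ0 (X ω) := by
    refine (condExp_mul_of_stronglyMeasurable_left hf4m hf4g4i hg4i).trans ?_
    filter_upwards [hEg4] with ω hω
    simp only [Pi.mul_apply, hf4]
    rw [hω]
    field_simp [h1ene (X ω)]
  -- linearity
  have hsum1 : Integrable (T0 + f1 * g1) P := hT0i.add hf1g1i
  have hsum2 : Integrable (T0 + f1 * g1 - f2 * A) P := hsum1.sub hf2Ai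
  have hsum3 : Integrable (T0 + f1 * g1 - f2 * A - f3 * g3) P := hsum2.sub hf3g3i
  have hlin : P[ψ | mE.comap X] =ᵐ[P]
      P[T0 | mE.comap X] + P[f1 * g1 | mE.comap X] - P[f2 * A | mE.comap X]
        - P[f3 * g3 | mE.comap X] + P[f4 * g4 | mE.comap X] := by
    rw [hψeq]
    refine (condExp_add hsum3 hf4g4i _).trans ?_
    have h3 := condExp_sub (μ := P) (m := mE.comap X) hsum2 hf3g3i
    have h2 := condExp_sub (μ := P) (m := mE.comap X) hsum1 hf2Ai
    have h1 := condExp_add (μ := P) (m := mE.comap X) hT0i hf1g1i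
    filter_upwards [h3, h2, h1] with ω e3 e2 e1
    simp only [Pi.add_apply, Pi.sub_apply] at *
    rw [e3, e2, e1]
  refine hlin.trans ?_
  filter_upwards [hE0, hE1, hE2, hE3, hE4] with ω e0 e1 e2 e3 e4
  simp only [Pi.add_apply, Pi.sub_apply]
  rw [e0, e1, e2, e3, e4]
  simp [hT0]
end

section
/- In the DR setup, let Δ0, Δ1 : E → ℝ be bounded measurable functions. Then E[Δ1(X) − Δ0(X) − w(X, A)·(A·Δ1(X) + (1 − A)·Δ0(X)) | 𝒢] = 0, P-almost surely. (Neyman orthogonality of the cross-fitted pseudo-outcome: for any fixed perturbation (Δ0, Δ1) of the arm-specific outcome regressions, the induced error in the doubly robust pseudo-outcome has conditional mean zero given the covariates, using only that the propensity is known by design.) -/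
open MeasureTheory

lemma integrable_of_bdd' {Ω : Type*} [MeasurableSpace Ω] (P : Measure Ω)
    [IsFiniteMeasure P] {f : Ω → ℝ} (hf : Measurable f) (C : ℝ)
    (h : ∀ ω, |f ω| ≤ C) : Integrable f P :=
  ⟨hf.aestronglyMeasurable,
    HasFiniteIntegral.of_bounded (C := C) (Filter.Eventually.of_forall fun ω => by
      simpa using h ω)⟩

/-- Neyman orthogonality of the cross-fitted pseudo-outcome: for any fixed
bounded measurable perturbation `(Δ0, Δ1)` of the arm-specific outcome
regressions, the induced error in the doubly robust pseudo-outcome has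
conditional mean zero given the covariates. -/
theorem dr_pseudo_outcome_orthogonality
    {Ω : Type*} [MeasurableSpace Ω] (P : Measure Ω) [IsProbabilityMeasure P]
    {E : Type*} [mE : MeasurableSpace E]
    (X : Ω → E) (hX : Measurable X)
    (A : Ω → ℝ) (hA : Measurable A) (hA01 : ∀ ω, A ω = 0 ∨ A ω = 1)
    (ε : ℝ) (hε0 : 0 < ε) (hε12 : ε ≤ 1 / 2)
    (e : E → ℝ) (he : Measurable e) (hebd : ∀ x, ε ≤ e x ∧ e x ≤ 1 - ε)
    (hcondA : P[A | mE.comap X] =ᵐ[P] fun ω => e (X ω))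
    (Δ0 Δ1 : E → ℝ) (hΔ0 : Measurable Δ0) (hΔ1 : Measurable Δ1)
    (hΔ0b : ∃ C, ∀ x, |Δ0 x| ≤ C) (hΔ1b : ∃ C, ∀ x, |Δ1 x| ≤ C) :
    P[fun ω => Δ1 (X ω) - Δ0 (X ω) -
        ((A ω - e (X ω)) / (e (X ω) * (1 - e (X ω)))) *
          (A ω * Δ1 (X ω) + (1 - A ω) * Δ0 (X ω)) | mE.comap X]
      =ᵐ[P] fun _ => (0 : ℝ) := by
  obtain ⟨C0, hC0⟩ := hΔ0b
  obtain ⟨C1, hC1⟩ := hΔ1b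
  have hm : mE.comap X ≤ _ := hX.comap_le
  have he_pos : ∀ x, 0 < e x := fun x => lt_of_lt_of_le hε0 (hebd x).1
  have he1_pos : ∀ x, 0 < 1 - e x := fun x => by
    have := (hebd x).2; linarith
  have hε_le1e : ∀ x, ε ≤ 1 - e x := fun x => by linarith [(hebd x).2]
  set g : E → ℝ := fun x => -(Δ1 x / e x) - Δ0 x / (1 - e x) with hg_def
  have hg : Measurable g := ((hΔ1.div he).neg.sub (hΔ0.div (measurable_const.sub he)))
  have hgb : ∀ x, |g x| ≤ |C1| / ε + |C0| / ε := by
    intro x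
    have h1 : |Δ1 x / e x| ≤ |C1| / ε := by
      rw [abs_div, abs_of_pos (he_pos x)]
      exact div_le_div₀ (abs_nonneg _) ((hC1 x).trans (le_abs_self _)) hε0 (hebd x).1
    have h0 : |Δ0 x / (1 - e x)| ≤ |C0| / ε := by
      rw [abs_div, abs_of_pos (he1_pos x)]
      exact div_le_div₀ (abs_nonneg _) ((hC0 x).trans (le_abs_self _)) hε0 (hε_le1e x)
    have h2 : |g x| ≤ |Δ1 x / e x| + |Δ0 x / (1 - e x)| := by
      have := abs_sub (-(Δ1 x / e x)) (Δ0 x / (1 - e x))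
      simpa [hg_def, abs_neg] using this
    linarith
  have hpt : ∀ ω, Δ1 (X ω) - Δ0 (X ω) -
        ((A ω - e (X ω)) / (e (X ω) * (1 - e (X ω)))) *
          (A ω * Δ1 (X ω) + (1 - A ω) * Δ0 (X ω))
      = g (X ω) * (A ω - e (X ω)) := by
    intro ω
    have h1 : e (X ω) ≠ 0 := ne_of_gt (he_pos (X ω))
    have h2 : (1 : ℝ) - e (X ω) ≠ 0 := ne_of_gt (he1_pos (X ω))
    rcases hA01 ω with h | h <;> simp only [hg_def, h] <;> field_simp <;> ring
  have hAb : ∀ ω, |A ω| ≤ 1 := fun ω => by rcases hA01 ω with h | h <;> simp [h]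
  have hAe_meas : Measurable (fun ω => A ω - e (X ω)) := hA.sub (he.comp hX)
  have hebd2 : ∀ ω, |A ω - e (X ω)| ≤ 2 := by
    intro ω
    have h1 := (hebd (X ω)).1; have h2 := (hebd (X ω)).2
    cases abs_le.mp (hAb ω)
    rw [abs_sub_le_iff]; constructor <;> linarith
  have hAe_int : Integrable (fun ω => A ω - e (X ω)) P :=
    integrable_of_bdd' P hAe_meas 2 hebd2
  have hprod_int : Integrable (fun ω => g (X ω) * (A ω - e (X ω))) P := by
    refine integrable_of_bdd' P ((hg.comp hX).mul hAe_meas) ((|C1| / ε + |C0| / ε) * 2)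
      fun ω => ?_
    rw [abs_mul]
    exact mul_le_mul (hgb (X ω)) (hebd2 ω) (abs_nonneg _) (by positivity)
  have hA_int : Integrable A P := integrable_of_bdd' P hA 1 hAb
  have heX_int : Integrable (fun ω => e (X ω)) P := by
    refine integrable_of_bdd' P (he.comp hX) 1 fun ω => ?_
    have h1 := (hebd (X ω)).1; have h2 := (hebd (X ω)).2
    rw [abs_le]; constructor <;> linarith
  have hX_m : @Measurable Ω E (mE.comap X) mE X := fun s hs => ⟨s, hs, rfl⟩
  have hgX_sm : StronglyMeasurable[mE.comap X] (fun ω => g (X ω)) :=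
    (hg.comp hX_m).stronglyMeasurable
  have heX_sm : StronglyMeasurable[mE.comap X] (fun ω => e (X ω)) :=
    (he.comp hX_m).stronglyMeasurable
  rw [show (fun ω => Δ1 (X ω) - Δ0 (X ω) -
        ((A ω - e (X ω)) / (e (X ω) * (1 - e (X ω)))) *
          (A ω * Δ1 (X ω) + (1 - A ω) * Δ0 (X ω)))
      = fun ω => g (X ω) * (A ω - e (X ω)) from funext hpt]
  have hmul : P[(fun ω => g (X ω)) * (fun ω => A ω - e (X ω)) | mE.comap X]
      =ᵐ[P] (fun ω => g (X ω)) * P[(fun ω => A ω - e (X ω)) | mE.comap X] :=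
    condExp_mul_of_stronglyMeasurable_left hgX_sm hprod_int hAe_int
  have hsub : P[(fun ω => A ω - e (X ω)) | mE.comap X]
      =ᵐ[P] P[A | mE.comap X] - P[(fun ω => e (X ω)) | mE.comap X] :=
    condExp_sub hA_int heX_int (mE.comap X)
  have heq : P[(fun ω => e (X ω)) | mE.comap X] =ᵐ[P] fun ω => e (X ω) :=
    Filter.EventuallyEq.of_eq (condExp_of_stronglyMeasurable hm heX_sm heX_int)
  have : (fun ω => g (X ω) * (A ω - e (X ω)))
      = (fun ω => g (X ω)) * (fun ω => A ω - e (X ω)) := rfl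
  rw [this]
  filter_upwards [hmul, hsub, heq, hcondA] with ω h1 h2 h3 h4
  simp only [Pi.mul_apply, Pi.sub_apply] at h1 h2
  rw [h1, h2, h3, h4]
  ring
end

section
/- In the DR setup, let ((X_i, A_i))_{i=1,…,n} be independent and identically distributed copies of (X, A), let Δ0, Δ1 : E → ℝ be measurable functions with Δ0 ∘ X and Δ1 ∘ X square-integrable, let d ≥ 1 and let Z : E → ℝ^d be measurable with ‖Z(x)‖ ≤ K for all x ∈ E, where K < ∞. Define D_i := Δ1(X_i) − Δ0(X_i) − w(X_i, A_i)·(A_i·Δ1(X_i) + (1 − A_i)·Δ0(X_i)). Then E[‖(1/n)·Σ_{i=1}^n Z(X_i)·D_i‖²] ≤ (2·K²·(1 + 1/ε)²/n)·(E[Δ0(X)²] + E[Δ1(X)²]). (Cross-fitted nuisance term bound: because each summand has conditional mean zero given the covariates, the cross terms vanish by independence and the averaged nuisance-generated error is of order 1/n times the squared L² nuisance errors.) -/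
open MeasureTheory ProbabilityTheory

lemma dr_integral_mul_condexp_aux {Ω : Type*} [MeasurableSpace Ω] (P : Measure Ω)
    [IsProbabilityMeasure P]
    {E : Type*} [mE : MeasurableSpace E] {X : Ω → E} (hX : Measurable X)
    {A : Ω → ℝ} {e : E → ℝ}
    (hcond : P[A | mE.comap X] =ᵐ[P] fun ω => e (X ω))
    {g : E → ℝ} (hg : Measurable g)
    (hAg : Integrable (fun ω => A ω * g (X ω)) P)
    (hA_int : Integrable A P) :
    ∫ ω, A ω * g (X ω) ∂P = ∫ ω, e (X ω) * g (X ω) ∂P := by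
  have hm : mE.comap X ≤ ‹MeasurableSpace Ω› := hX.comap_le
  haveI : SigmaFinite (P.trim hm) := by
    apply IsFiniteMeasure.toSigmaFinite
  have hgm : StronglyMeasurable[mE.comap X] fun ω => g (X ω) :=
    (hg.comp (comap_measurable X)).stronglyMeasurable
  have h1 : P[(fun ω => g (X ω)) * A | mE.comap X]
      =ᵐ[P] (fun ω => g (X ω)) * P[A | mE.comap X] :=
    condExp_mul_of_stronglyMeasurable_left hgm (by
      have : ((fun ω => g (X ω)) * A) = fun ω => A ω * g (X ω) := by
        ext ω; simp [mul_comm]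
      rw [this]; exact hAg) hA_int
  have h2 : ∫ ω, ((fun ω => g (X ω)) * A) ω ∂P
      = ∫ ω, (P[(fun ω => g (X ω)) * A | mE.comap X]) ω ∂P := by
    rw [integral_condExp hm]
  calc ∫ ω, A ω * g (X ω) ∂P = ∫ ω, ((fun ω => g (X ω)) * A) ω ∂P := by
        simp [mul_comm]
    _ = ∫ ω, (P[(fun ω => g (X ω)) * A | mE.comap X]) ω ∂P := h2
    _ = ∫ ω, e (X ω) * g (X ω) ∂P := by
        refine integral_congr_ae (h1.trans ?_)
        filter_upwards [hcond] with ω h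
        simp only [Pi.mul_apply, h]
        rw [mul_comm]

lemma dr_abs_bound (a b t Cc : ℝ) (ht0 : 0 ≤ t) (hC : 1 + t ≤ Cc) :
    |b - a + a * t| ≤ Cc * (|a| + |b|) := by
  have h1 : |b - a + a * t| ≤ |b| + |a| + |a| * t := by
    calc |b - a + a * t| ≤ |b - a| + |a * t| := abs_add_le _ _
      _ ≤ (|b| + |a|) + |a| * t := by
          rw [abs_mul, abs_of_nonneg ht0]
          exact add_le_add_left (abs_sub _ _) _
  have h2 : |a| * (1 + t) ≤ |a| * Cc := mul_le_mul_of_nonneg_left hC (abs_nonneg a)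
  have hC1 : (1 : ℝ) ≤ Cc := le_trans (by linarith) hC
  nlinarith [abs_nonneg a, abs_nonneg b]

set_option maxHeartbeats 1000000 in
/-- Cross-fitted nuisance term bound: because each summand has conditional mean
zero given the covariates, the cross terms vanish by independence and the
averaged nuisance-generated error is of order `1/n` times the squared `L²`
nuisance errors. -/
theorem dr_crossfitted_nuisance_term_bound
    {Ω : Type*} [MeasurableSpace Ω] (P : Measure Ω) [IsProbabilityMeasure P]
    {E : Type*} [mE : MeasurableSpace E]
    (X : Ω → E) (hX : Measurable X)
    (A : Ω → ℝ) (hA : Measurable A) (hA01 : ∀ ω, A ω = 0 ∨ A ω = 1)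
    (ε : ℝ) (hε0 : 0 < ε) (hε12 : ε ≤ 1 / 2)
    (e : E → ℝ) (he : Measurable e) (hebd : ∀ x, ε ≤ e x ∧ e x ≤ 1 - ε)
    (hcondA : P[A | mE.comap X] =ᵐ[P] fun ω => e (X ω))
    (n : ℕ) (hn : 0 < n)
    (Xs : Fin n → Ω → E) (As : Fin n → Ω → ℝ)
    (hXs : ∀ i, Measurable (Xs i)) (hAs : ∀ i, Measurable (As i))
    (hindep : iIndepFun
      (fun i ω => (Xs i ω, As i ω)) P)
    (hident : ∀ i, IdentDistrib (fun ω => (Xs i ω, As i ω))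
      (fun ω => (X ω, A ω)) P P)
    (hcondAs : ∀ i, P[As i | mE.comap (Xs i)] =ᵐ[P] fun ω => e (Xs i ω))
    (Δ0 Δ1 : E → ℝ) (hΔ0 : Measurable Δ0) (hΔ1 : Measurable Δ1)
    (hΔ0sq : Integrable (fun ω => Δ0 (X ω) ^ 2) P)
    (hΔ1sq : Integrable (fun ω => Δ1 (X ω) ^ 2) P)
    (d : ℕ) (hd : 1 ≤ d)
    (Z : E → EuclideanSpace ℝ (Fin d)) (hZ : Measurable Z)
    (K : ℝ) (hK : ∀ x, ‖Z x‖ ≤ K)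
    (D : Fin n → Ω → ℝ)
    (hD : ∀ i ω, D i ω = Δ1 (Xs i ω) - Δ0 (Xs i ω) -
      ((As i ω - e (Xs i ω)) / (e (Xs i ω) * (1 - e (Xs i ω)))) *
        (As i ω * Δ1 (Xs i ω) + (1 - As i ω) * Δ0 (Xs i ω))) :
    ∫ ω, ‖(n : ℝ)⁻¹ • ∑ i : Fin n, D i ω • Z (Xs i ω)‖ ^ 2 ∂P ≤
      2 * K ^ 2 * (1 + 1 / ε) ^ 2 / n *
        ((∫ ω, Δ0 (X ω) ^ 2 ∂P) + ∫ ω, Δ1 (X ω) ^ 2 ∂P) := by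
  classical
  set C : ℝ := 1 + 1 / ε with hCdef
  have hC0 : 0 < C := by have := one_div_pos.2 hε0; simp only [hCdef]; linarith
  have hC1 : (1 : ℝ) ≤ C := by have := le_of_lt (one_div_pos.2 hε0); simp only [hCdef]; linarith
  have hee : ∀ x, ε ≤ e x ∧ ε ≤ 1 - e x := fun x =>
    ⟨(hebd x).1, by have h := (hebd x).2; linarith⟩
  have he0 : ∀ x, 0 < e x := fun x => lt_of_lt_of_le hε0 (hee x).1
  have he1 : ∀ x, 0 < 1 - e x := fun x => lt_of_lt_of_le hε0 (hee x).2
  have hte : ∀ x, 1 / e x ≤ 1 / ε := fun x => one_div_le_one_div_of_le hε0 (hee x).1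
  have hte' : ∀ x, 1 / (1 - e x) ≤ 1 / ε := fun x => one_div_le_one_div_of_le hε0 (hee x).2
  have hΩ : Nonempty Ω := by
    by_contra h
    rw [not_nonempty_iff] at h
    have h1 : P Set.univ = 1 := measure_univ
    rw [Set.univ_eq_empty_iff.mpr h, measure_empty] at h1
    exact zero_ne_one h1
  have hK0 : (0 : ℝ) ≤ K := le_trans (norm_nonneg _) (hK (X hΩ.some))
  have hn0 : (0 : ℝ) < (n : ℝ) := by exact_mod_cast hn
  -- coordinates of Z
  have hZk : ∀ k : Fin d, Measurable fun x => Z x k := fun k =>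
    (measurable_pi_apply k).comp ((WithLp.measurable_ofLp _ _).comp hZ)
  have hZkK : ∀ (k : Fin d) (x : E), |Z x k| ≤ K := by
    intro k x
    refine le_trans ?_ (hK x)
    rw [EuclideanSpace.norm_eq, ← Real.sqrt_sq (abs_nonneg (Z x k))]
    apply Real.sqrt_le_sqrt
    rw [sq_abs]
    have : (Z x k) ^ 2 = ‖Z x k‖ ^ 2 := by rw [Real.norm_eq_abs, sq_abs]
    rw [this]
    exact Finset.single_le_sum (f := fun j => ‖Z x j‖ ^ 2)
      (fun j _ => sq_nonneg _) (Finset.mem_univ k)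
  have hZsum : ∀ x, ∑ k : Fin d, (Z x k) ^ 2 = ‖Z x‖ ^ 2 := by
    intro x
    rw [EuclideanSpace.norm_eq, Real.sq_sqrt (by positivity)]
    refine Finset.sum_congr rfl fun k _ => ?_
    rw [Real.norm_eq_abs, sq_abs]
  -- the factorizing function
  set F : E × ℝ → ℝ := fun p => Δ1 p.1 - Δ0 p.1 -
    ((p.2 - e p.1) / (e p.1 * (1 - e p.1))) *
      (p.2 * Δ1 p.1 + (1 - p.2) * Δ0 p.1) with hFdef
  have hF : Measurable F := by
    apply Measurable.sub
    · exact (hΔ1.comp measurable_fst).sub (hΔ0.comp measurable_fst)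
    · apply Measurable.mul
      · exact (measurable_snd.sub (he.comp measurable_fst)).div
          (((he.comp measurable_fst)).mul
            (measurable_const.sub (he.comp measurable_fst)))
      · exact (measurable_snd.mul (hΔ1.comp measurable_fst)).add
          ((measurable_const.sub measurable_snd).mul (hΔ0.comp measurable_fst))
  have hDF : ∀ i ω, D i ω = F (Xs i ω, As i ω) := fun i ω => hD i ω
  have hDmeas : ∀ i, Measurable (D i) := by
    intro i
    have : D i = fun ω => F (Xs i ω, As i ω) := funext (hDF i)
    rw [this]
    exact hF.comp ((hXs i).prodMk (hAs i))
  -- second-stage coordinates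
  set Wf : Fin d → Fin n → Ω → ℝ := fun k i ω => D i ω * Z (Xs i ω) k with hWfdef
  have hWmeas : ∀ k i, Measurable (Wf k i) := fun k i =>
    (hDmeas i).mul ((hZk k).comp (hXs i))
  -- a.e. {0,1}-valuedness
  have hAs01 : ∀ i, ∀ᵐ ω ∂P, As i ω = 0 ∨ As i ω = 1 := by
    intro i
    have hid : IdentDistrib (As i) A P P := (hident i).comp measurable_snd
    have hSm : MeasurableSet ({0, 1} : Set ℝ) :=
      (measurableSet_singleton (1:ℝ)).insert 0
    rw [ae_iff]
    have hpre : {ω | ¬(As i ω = 0 ∨ As i ω = 1)} = As i ⁻¹' ({0, 1} : Set ℝ)ᶜ := by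
      ext ω; simp [Set.mem_insert_iff]
    rw [hpre, ← Measure.map_apply (hAs i) hSm.compl, hid.map_eq,
      Measure.map_apply hA hSm.compl]
    have : A ⁻¹' ({0, 1} : Set ℝ)ᶜ = ∅ := by
      ext ω
      simp [Set.mem_insert_iff, hA01 ω]
    rw [this, measure_empty]
  have hAint : ∀ i, Integrable (As i) P := by
    intro i
    refine Integrable.mono' (integrable_const 1) (hAs i).aestronglyMeasurable ?_
    filter_upwards [hAs01 i] with ω h
    rcases h with h | h <;> simp [h]
  -- L² facts about the nuisance errors
  set L0 : Ω → ℝ := fun ω => |Δ0 (X ω)| + |Δ1 (X ω)| with hL0def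
  set L : Fin n → Ω → ℝ := fun i ω => |Δ0 (Xs i ω)| + |Δ1 (Xs i ω)| with hLdef
  have hL0mem : MemLp L0 2 P := by
    have h0 : MemLp (fun ω => |Δ0 (X ω)|) 2 P :=
      (memLp_two_iff_integrable_sq ((hΔ0.comp hX).abs.aestronglyMeasurable)).2
        (by simpa [sq_abs] using hΔ0sq)
    have h1 : MemLp (fun ω => |Δ1 (X ω)|) 2 P :=
      (memLp_two_iff_integrable_sq ((hΔ1.comp hX).abs.aestronglyMeasurable)).2
        (by simpa [sq_abs] using hΔ1sq)
    exact h0.add h1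
  have hL0sqint : Integrable (fun ω => L0 ω ^ 2) P :=
    (memLp_two_iff_integrable_sq hL0mem.aestronglyMeasurable).1 hL0mem
  have hL0sq_le : ∫ ω, L0 ω ^ 2 ∂P ≤
      2 * ((∫ ω, Δ0 (X ω) ^ 2 ∂P) + ∫ ω, Δ1 (X ω) ^ 2 ∂P) := by
    have hint : Integrable (fun ω => 2 * (Δ0 (X ω) ^ 2 + Δ1 (X ω) ^ 2)) P :=
      (hΔ0sq.add hΔ1sq).const_mul 2
    have hle : ∀ ω, L0 ω ^ 2 ≤ 2 * (Δ0 (X ω) ^ 2 + Δ1 (X ω) ^ 2) := by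
      intro ω
      simp only [hL0def]
      nlinarith [sq_nonneg (|Δ0 (X ω)| - |Δ1 (X ω)|), sq_abs (Δ0 (X ω)), sq_abs (Δ1 (X ω)),
        abs_nonneg (Δ0 (X ω)), abs_nonneg (Δ1 (X ω))]
    calc ∫ ω, L0 ω ^ 2 ∂P ≤ ∫ ω, 2 * (Δ0 (X ω) ^ 2 + Δ1 (X ω) ^ 2) ∂P :=
          integral_mono hL0sqint hint hle
      _ = 2 * ((∫ ω, Δ0 (X ω) ^ 2 ∂P) + ∫ ω, Δ1 (X ω) ^ 2 ∂P) := by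
          rw [integral_const_mul, integral_add hΔ0sq hΔ1sq]
  have hLid : ∀ i, IdentDistrib (L i) L0 P P := fun i =>
    (hident i).comp ((hΔ0.comp measurable_fst).abs.add (hΔ1.comp measurable_fst).abs)
  have hLmem : ∀ i, MemLp (L i) 2 P := fun i => (hLid i).memLp_iff.2 hL0mem
  have hLint : ∀ i, Integrable (L i) P := fun i => (hLmem i).integrable one_le_two
  have hLsqint : ∀ i, Integrable (fun ω => L i ω ^ 2) P := fun i =>
    (memLp_two_iff_integrable_sq (hLmem i).aestronglyMeasurable).1 (hLmem i)
  have hLsq_eq : ∀ i, ∫ ω, L i ω ^ 2 ∂P = ∫ ω, L0 ω ^ 2 ∂P := by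
    intro i
    have : IdentDistrib (fun ω => L i ω ^ 2) (fun ω => L0 ω ^ 2) P P :=
      (hident i).comp (((hΔ0.comp measurable_fst).abs.add
        (hΔ1.comp measurable_fst).abs).pow_const 2)
    exact this.integral_eq
  -- a.e. bound on D
  have hDbd : ∀ i, ∀ᵐ ω ∂P, |D i ω| ≤ C * L i ω := by
    intro i
    filter_upwards [hAs01 i] with ω h01
    have hex := he0 (Xs i ω)
    have h1x := he1 (Xs i ω)
    rcases h01 with h | h
    · have heq : D i ω = Δ1 (Xs i ω) - Δ0 (Xs i ω) +
          Δ0 (Xs i ω) * (1 / (1 - e (Xs i ω))) := by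
        rw [hD i ω, h]
        field_simp
        ring
      rw [heq, hLdef]
      exact dr_abs_bound _ _ _ _ (by positivity)
        (by have := hte' (Xs i ω); simp only [hCdef]; linarith)
    · have heq : D i ω = -(Δ0 (Xs i ω) - Δ1 (Xs i ω) +
          Δ1 (Xs i ω) * (1 / e (Xs i ω))) := by
        rw [hD i ω, h]
        field_simp
        ring
      rw [heq, abs_neg, hLdef]
      have := dr_abs_bound (Δ1 (Xs i ω)) (Δ0 (Xs i ω)) (1 / e (Xs i ω)) C
        (by positivity) (by have := hte (Xs i ω); simp only [hCdef]; linarith)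
      calc |Δ0 (Xs i ω) - Δ1 (Xs i ω) + Δ1 (Xs i ω) * (1 / e (Xs i ω))| ≤
            C * (|Δ1 (Xs i ω)| + |Δ0 (Xs i ω)|) := this
        _ = C * (fun ω => |Δ0 (Xs i ω)| + |Δ1 (Xs i ω)|) ω := by ring_nf
  -- mean zero
  have hWmean : ∀ (k : Fin d) (i : Fin n), ∫ ω, Wf k i ω ∂P = 0 := by
    intro k i
    set G0 : E → ℝ := fun x => (Δ1 x - Δ0 x + Δ0 x * (1 / (1 - e x))) * Z x k with hG0def
    set G1 : E → ℝ := fun x => (-(Δ1 x * (1 / e x)) - Δ0 x * (1 / (1 - e x))) * Z x k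
      with hG1def
    have hG0m : Measurable G0 := by
      apply Measurable.mul _ (hZk k)
      exact (hΔ1.sub hΔ0).add (hΔ0.mul (measurable_const.div (measurable_const.sub he)))
    have hG1m : Measurable G1 := by
      apply Measurable.mul _ (hZk k)
      exact ((hΔ1.mul (measurable_const.div he)).neg).sub
        (hΔ0.mul (measurable_const.div (measurable_const.sub he)))
    have hbd0 : ∀ x, |G0 x| ≤ K * C * (|Δ0 x| + |Δ1 x|) := by
      intro x
      have hbr : |Δ1 x - Δ0 x + Δ0 x * (1 / (1 - e x))| ≤ C * (|Δ0 x| + |Δ1 x|) :=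
        dr_abs_bound _ _ _ _ (by have := he1 x; positivity)
          (by have := hte' x; simp only [hCdef]; linarith)
      calc |G0 x| = |Δ1 x - Δ0 x + Δ0 x * (1 / (1 - e x))| * |Z x k| := abs_mul _ _
        _ ≤ (C * (|Δ0 x| + |Δ1 x|)) * K :=
            mul_le_mul hbr (hZkK k x) (abs_nonneg _) (by positivity)
        _ = K * C * (|Δ0 x| + |Δ1 x|) := by ring
    have hbd1 : ∀ x, |G1 x| ≤ K * C * (|Δ0 x| + |Δ1 x|) := by
      intro x
      have hεC : 1 / ε ≤ C := by simp only [hCdef]; linarith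
      have h1 : |Δ1 x * (1 / e x)| ≤ |Δ1 x| * (1 / ε) := by
        rw [abs_mul, abs_of_pos (by have := he0 x; positivity : (0:ℝ) < 1 / e x)]
        exact mul_le_mul_of_nonneg_left (hte x) (abs_nonneg _)
      have h2 : |Δ0 x * (1 / (1 - e x))| ≤ |Δ0 x| * (1 / ε) := by
        rw [abs_mul, abs_of_pos (by have := he1 x; positivity : (0:ℝ) < 1 / (1 - e x))]
        exact mul_le_mul_of_nonneg_left (hte' x) (abs_nonneg _)
      have hbr : |-(Δ1 x * (1 / e x)) - Δ0 x * (1 / (1 - e x))| ≤ C * (|Δ0 x| + |Δ1 x|) := by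
        calc |-(Δ1 x * (1 / e x)) - Δ0 x * (1 / (1 - e x))|
            ≤ |-(Δ1 x * (1 / e x))| + |Δ0 x * (1 / (1 - e x))| := abs_sub _ _
          _ = |Δ1 x * (1 / e x)| + |Δ0 x * (1 / (1 - e x))| := by rw [abs_neg]
          _ ≤ |Δ1 x| * (1 / ε) + |Δ0 x| * (1 / ε) := add_le_add h1 h2
          _ ≤ C * (|Δ0 x| + |Δ1 x|) := by
              nlinarith [abs_nonneg (Δ0 x), abs_nonneg (Δ1 x),
                mul_le_mul_of_nonneg_right hεC
                  (add_nonneg (abs_nonneg (Δ0 x)) (abs_nonneg (Δ1 x)))]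
      calc |G1 x| = |-(Δ1 x * (1 / e x)) - Δ0 x * (1 / (1 - e x))| * |Z x k| := abs_mul _ _
        _ ≤ (C * (|Δ0 x| + |Δ1 x|)) * K :=
            mul_le_mul hbr (hZkK k x) (abs_nonneg _) (by positivity)
        _ = K * C * (|Δ0 x| + |Δ1 x|) := by ring
    have hG0int : Integrable (fun ω => G0 (Xs i ω)) P := by
      refine Integrable.mono' ((hLint i).const_mul (K * C))
        (hG0m.comp (hXs i)).aestronglyMeasurable ?_
      refine Filter.Eventually.of_forall fun ω => ?_
      rw [Real.norm_eq_abs]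
      exact hbd0 (Xs i ω)
    have hG1int : Integrable (fun ω => G1 (Xs i ω)) P := by
      refine Integrable.mono' ((hLint i).const_mul (K * C))
        (hG1m.comp (hXs i)).aestronglyMeasurable ?_
      refine Filter.Eventually.of_forall fun ω => ?_
      rw [Real.norm_eq_abs]
      exact hbd1 (Xs i ω)
    have hAG1int : Integrable (fun ω => As i ω * G1 (Xs i ω)) P := by
      refine Integrable.mono' ((hLint i).const_mul (K * C))
        ((hAs i).mul (hG1m.comp (hXs i))).aestronglyMeasurable ?_
      filter_upwards [hAs01 i] with ω h01
      have hAle : |As i ω| ≤ 1 := by rcases h01 with h | h <;> simp [h]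
      rw [Real.norm_eq_abs, abs_mul]
      calc |As i ω| * |G1 (Xs i ω)| ≤ 1 * (K * C * (L i ω)) := by
            apply mul_le_mul hAle (hbd1 (Xs i ω)) (abs_nonneg _) one_pos.le
        _ = K * C * L i ω := one_mul _
    have heG1int : Integrable (fun ω => e (Xs i ω) * G1 (Xs i ω)) P := by
      refine Integrable.mono' ((hLint i).const_mul (K * C))
        ((he.comp (hXs i)).mul (hG1m.comp (hXs i))).aestronglyMeasurable ?_
      refine Filter.Eventually.of_forall fun ω => ?_
      have hele : |e (Xs i ω)| ≤ 1 := by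
        rw [abs_of_pos (he0 (Xs i ω))]
        have h1 := (hebd (Xs i ω)).2
        linarith [hε0]
      rw [Real.norm_eq_abs, abs_mul]
      calc |e (Xs i ω)| * |G1 (Xs i ω)| ≤ 1 * (K * C * (L i ω)) := by
            apply mul_le_mul hele (hbd1 (Xs i ω)) (abs_nonneg _) one_pos.le
        _ = K * C * L i ω := one_mul _
    have heqW : (fun ω => Wf k i ω) =ᵐ[P] fun ω => G0 (Xs i ω) + As i ω * G1 (Xs i ω) := by
      filter_upwards [hAs01 i] with ω h01
      have hexne : e (Xs i ω) ≠ 0 := ne_of_gt (he0 (Xs i ω))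
      have h1xne : (1 : ℝ) - e (Xs i ω) ≠ 0 := ne_of_gt (he1 (Xs i ω))
      have hzk := Z (Xs i ω) k
      rcases h01 with h | h
      · show Wf k i ω = G0 (Xs i ω) + As i ω * G1 (Xs i ω)
        simp only [hWfdef, hG0def, hG1def, hD i ω, h]
        field_simp
        ring
      · show Wf k i ω = G0 (Xs i ω) + As i ω * G1 (Xs i ω)
        simp only [hWfdef, hG0def, hG1def, hD i ω, h]
        field_simp
        ring
    rw [integral_congr_ae heqW, integral_add hG0int hAG1int,
      dr_integral_mul_condexp_aux P (hXs i) (hcondAs i) hG1m hAG1int (hAint i),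
      ← integral_add hG0int heG1int]
    have hzero : ∀ x, G0 x + e x * G1 x = 0 := by
      intro x
      have hexne : e x ≠ 0 := ne_of_gt (he0 x)
      have h1xne : (1 : ℝ) - e x ≠ 0 := ne_of_gt (he1 x)
      simp only [hG0def, hG1def]
      field_simp
      ring
    simp only [hzero]
    exact integral_zero _ _
  -- MemLp
  have hWmem2 : ∀ (k : Fin d) (i : Fin n), MemLp (Wf k i) 2 P := by
    intro k i
    refine MemLp.of_le ((hLmem i).const_mul (K * C)) (hWmeas k i).aestronglyMeasurable ?_
    filter_upwards [hDbd i] with ω hb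
    have hL0' : 0 ≤ L i ω := by simp only [hLdef]; positivity
    have : |D i ω * Z (Xs i ω) k| ≤ (C * L i ω) * K := by
      rw [abs_mul]
      exact mul_le_mul hb (hZkK k _) (abs_nonneg _) (by positivity)
    simp only [Real.norm_eq_abs, hWfdef]
    calc |D i ω * Z (Xs i ω) k| ≤ (C * L i ω) * K := this
      _ ≤ |K * C * L i ω| := by
          rw [abs_of_nonneg (by positivity)]
          ring_nf
          exact le_refl _
  have hWint : ∀ k i, Integrable (Wf k i) P := fun k i =>
    (hWmem2 k i).integrable one_le_two
  have hWsqint : ∀ k i, Integrable (fun ω => Wf k i ω ^ 2) P := fun k i =>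
    (memLp_two_iff_integrable_sq (hWmem2 k i).aestronglyMeasurable).1 (hWmem2 k i)
  -- pairwise independence
  have hWindep : ∀ (k : Fin d) (i j : Fin n), i ≠ j →
      IndepFun (Wf k i) (Wf k j) P := by
    intro k i j hij
    have hφ : Measurable (fun p : E × ℝ => F p * Z p.1 k) :=
      hF.mul ((hZk k).comp measurable_fst)
    have h := (hindep.indepFun hij).comp hφ hφ
    have hEq : ∀ l : Fin n, Wf k l =
        (fun p : E × ℝ => F p * Z p.1 k) ∘ (fun ω => (Xs l ω, As l ω)) := by
      intro l; funext ω; simp only [hWfdef, Function.comp_apply, hDF l ω]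
    rw [hEq i, hEq j]
    exact h
  -- key identity per coordinate
  have hkey : ∀ k : Fin d,
      ∫ ω, (∑ i : Fin n, Wf k i ω) ^ 2 ∂P = ∑ i : Fin n, ∫ ω, Wf k i ω ^ 2 ∂P := by
    intro k
    have hmem_sum : MemLp (∑ i : Fin n, Wf k i) 2 P :=
      memLp_finset_sum' _ fun i _ => hWmem2 k i
    have hpair : Set.Pairwise ↑(Finset.univ : Finset (Fin n))
        (fun i j => IndepFun (Wf k i) (Wf k j) P) :=
      fun i _ j _ hij => hWindep k i j hij
    have hvar := IndepFun.variance_sum (μ := P) (fun i _ => hWmem2 k i) hpair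
    have hmean_sum : ∫ ω, (∑ i : Fin n, Wf k i) ω ∂P = 0 := by
      simp only [Finset.sum_apply]
      rw [integral_finset_sum _ fun i _ => hWint k i]
      simp only [hWmean k, Finset.sum_const_zero]
    have he1 : (∫ ω, ((∑ i : Fin n, Wf k i) ^ 2) ω ∂P)
        = ∫ ω, (∑ i : Fin n, Wf k i ω) ^ 2 ∂P := by
      refine integral_congr_ae (Filter.Eventually.of_forall fun ω => ?_)
      simp [Finset.sum_apply]
    have h1 : variance (∑ i : Fin n, Wf k i) P = ∫ ω, (∑ i : Fin n, Wf k i ω) ^ 2 ∂P := by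
      rw [variance_eq_sub hmem_sum, hmean_sum, ← he1]
      ring
    have h2 : ∀ i : Fin n, variance (Wf k i) P = ∫ ω, Wf k i ω ^ 2 ∂P := by
      intro i
      rw [variance_eq_sub (hWmem2 k i), hWmean k i]
      have he2 : (∫ ω, ((Wf k i) ^ 2) ω ∂P) = ∫ ω, Wf k i ω ^ 2 ∂P := by
        refine integral_congr_ae (Filter.Eventually.of_forall fun ω => ?_)
        simp
      rw [← he2]
      ring
    calc ∫ ω, (∑ i : Fin n, Wf k i ω) ^ 2 ∂P
        = variance (∑ i : Fin n, Wf k i) P := h1.symm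
      _ = ∑ i : Fin n, variance (Wf k i) P := hvar
      _ = ∑ i : Fin n, ∫ ω, Wf k i ω ^ 2 ∂P := Finset.sum_congr rfl fun i _ => h2 i
  -- pointwise decomposition of the norm
  have hpt : ∀ ω, ‖(n : ℝ)⁻¹ • ∑ i : Fin n, D i ω • Z (Xs i ω)‖ ^ 2
      = ((n : ℝ)⁻¹) ^ 2 * ∑ k : Fin d, (∑ i : Fin n, Wf k i ω) ^ 2 := by
    intro ω
    rw [norm_smul, mul_pow]
    congr 1
    · rw [Real.norm_eq_abs, sq_abs]
    · rw [EuclideanSpace.norm_eq, Real.sq_sqrt (by positivity)]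
      refine Finset.sum_congr rfl fun k _ => ?_
      rw [Real.norm_eq_abs, sq_abs]
      congr 1
      simp only [hWfdef]
      rw [WithLp.ofLp_sum, Finset.sum_apply]
      simp
  have hsum_sq_int : ∀ k : Fin d, Integrable (fun ω => (∑ i : Fin n, Wf k i ω) ^ 2) P := by
    intro k
    have hm : MemLp (∑ i : Fin n, Wf k i) 2 P :=
      memLp_finset_sum' _ fun i _ => hWmem2 k i
    have := hm.integrable_sq
    simpa [Finset.sum_apply] using this
  -- bound on the diagonal terms
  have hdiag : ∀ i : Fin n, ∫ ω, ∑ k : Fin d, Wf k i ω ^ 2 ∂P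
      ≤ K ^ 2 * C ^ 2 * ∫ ω, L0 ω ^ 2 ∂P := by
    intro i
    have hRint : Integrable (fun ω => K ^ 2 * C ^ 2 * L i ω ^ 2) P :=
      (hLsqint i).const_mul _
    have hLint' : Integrable (fun ω => ∑ k : Fin d, Wf k i ω ^ 2) P :=
      integrable_finset_sum _ fun k _ => hWsqint k i
    have hle : ∀ᵐ ω ∂P, ∑ k : Fin d, Wf k i ω ^ 2 ≤ K ^ 2 * C ^ 2 * L i ω ^ 2 := by
      filter_upwards [hDbd i] with ω hb
      have hL0' : (0 : ℝ) ≤ L i ω := by simp only [hLdef]; positivity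
      have h1 : ∑ k : Fin d, Wf k i ω ^ 2 = D i ω ^ 2 * ‖Z (Xs i ω)‖ ^ 2 := by
        rw [← hZsum (Xs i ω), Finset.mul_sum]
        refine Finset.sum_congr rfl fun k _ => ?_
        simp only [hWfdef]
        ring
      rw [h1]
      have hD2 : D i ω ^ 2 ≤ C ^ 2 * L i ω ^ 2 := by
        nlinarith [mul_self_le_mul_self (abs_nonneg (D i ω)) hb, sq_abs (D i ω)]
      have hZ2 : ‖Z (Xs i ω)‖ ^ 2 ≤ K ^ 2 := by
        nlinarith [norm_nonneg (Z (Xs i ω)), hK (Xs i ω)]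
      nlinarith [sq_nonneg (D i ω), sq_nonneg (L i ω), sq_nonneg ‖Z (Xs i ω)‖,
        mul_nonneg (mul_nonneg (sq_nonneg C) (sq_nonneg (L i ω))) (sq_nonneg K)]
    calc ∫ ω, ∑ k : Fin d, Wf k i ω ^ 2 ∂P
        ≤ ∫ ω, K ^ 2 * C ^ 2 * L i ω ^ 2 ∂P := integral_mono_ae hLint' hRint hle
      _ = K ^ 2 * C ^ 2 * ∫ ω, L i ω ^ 2 ∂P := integral_const_mul _ _
      _ = K ^ 2 * C ^ 2 * ∫ ω, L0 ω ^ 2 ∂P := by rw [hLsq_eq i]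
  -- putting everything together
  have hS0 : (0 : ℝ) ≤ ∫ ω, L0 ω ^ 2 ∂P := integral_nonneg fun ω => sq_nonneg _
  calc ∫ ω, ‖(n : ℝ)⁻¹ • ∑ i : Fin n, D i ω • Z (Xs i ω)‖ ^ 2 ∂P
      = ∫ ω, ((n : ℝ)⁻¹) ^ 2 * ∑ k : Fin d, (∑ i : Fin n, Wf k i ω) ^ 2 ∂P := by
        refine integral_congr_ae (Filter.Eventually.of_forall fun ω => ?_)
        exact hpt ω
    _ = ((n : ℝ)⁻¹) ^ 2 * ∫ ω, ∑ k : Fin d, (∑ i : Fin n, Wf k i ω) ^ 2 ∂P :=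
        integral_const_mul _ _
    _ = ((n : ℝ)⁻¹) ^ 2 * ∑ k : Fin d, ∫ ω, (∑ i : Fin n, Wf k i ω) ^ 2 ∂P := by
        rw [integral_finset_sum _ fun k _ => hsum_sq_int k]
    _ = ((n : ℝ)⁻¹) ^ 2 * ∑ k : Fin d, ∑ i : Fin n, ∫ ω, Wf k i ω ^ 2 ∂P := by
        rw [Finset.sum_congr rfl fun k _ => hkey k]
    _ = ((n : ℝ)⁻¹) ^ 2 * ∑ i : Fin n, ∑ k : Fin d, ∫ ω, Wf k i ω ^ 2 ∂P := by
        rw [Finset.sum_comm]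
    _ = ((n : ℝ)⁻¹) ^ 2 * ∑ i : Fin n, ∫ ω, ∑ k : Fin d, Wf k i ω ^ 2 ∂P := by
        congr 1
        refine Finset.sum_congr rfl fun i _ => ?_
        rw [integral_finset_sum _ fun k _ => hWsqint k i]
    _ ≤ ((n : ℝ)⁻¹) ^ 2 * ∑ i : Fin n, (K ^ 2 * C ^ 2 * ∫ ω, L0 ω ^ 2 ∂P) := by
        refine mul_le_mul_of_nonneg_left (Finset.sum_le_sum fun i _ => hdiag i)
          (by positivity)
    _ = ((n : ℝ)⁻¹) * (K ^ 2 * C ^ 2 * ∫ ω, L0 ω ^ 2 ∂P) := by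
        rw [Finset.sum_const, Finset.card_univ, Fintype.card_fin, nsmul_eq_mul]
        field_simp
    _ ≤ ((n : ℝ)⁻¹) * (K ^ 2 * C ^ 2 *
          (2 * ((∫ ω, Δ0 (X ω) ^ 2 ∂P) + ∫ ω, Δ1 (X ω) ^ 2 ∂P))) := by
        refine mul_le_mul_of_nonneg_left
          (mul_le_mul_of_nonneg_left hL0sq_le (by positivity)) (by positivity)
    _ = 2 * K ^ 2 * C ^ 2 / n *
          ((∫ ω, Δ0 (X ω) ^ 2 ∂P) + ∫ ω, Δ1 (X ω) ^ 2 ∂P) := by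
        field_simp
end

section
/- In the DR setup, suppose additionally that Y : Ω → ℝ is integrable, that μ0, μ1 : E → ℝ are measurable with μ0 ∘ X and μ1 ∘ X integrable, and that the conditional moment conditions E[A·Y | 𝒢] = (e·μ1) ∘ X and E[(1 − A)·Y | 𝒢] = ((1 − e)·μ0) ∘ X hold P-almost surely. Let d ≥ 1, let b : E → ℝ^d be measurable and bounded, and let θ₀ ∈ ℝ^d satisfy μ1(x) − μ0(x) = ⟨b(x), θ₀⟩ for all x ∈ E (correct linear specification of the CATE in the feature map b). Define the oracle doubly robust pseudo-outcome ψ⁰ := μ1(X) − μ0(X) + w(X, A)·(Y − A·μ1(X) − (1 − A)·μ0(X)), and assume ψ⁰ is integrable. Then E[b(X)·(ψ⁰ − ⟨b(X), θ₀⟩)] = 0 in ℝ^d. (Second-stage moment condition: the oracle pseudo-outcome satisfies the population least-squares normal equations at the true second-stage coefficient θ₀.) -/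
/-!
On `{A = 1}` the weight is `1 / e(X)` and on `{A = 0}` it is `-1 / (1 - e(X))`, so under correct
specification the centred pseudo-outcome `ψ⁰ - ⟪b(X), θ₀⟫` equals
`A (Y - μ₁(X)) / e(X) - (1 - A) (Y - μ₀(X)) / (1 - e(X))`. Both residuals have zero conditional
expectation given `X`, and the factors `b(X) / e(X)`, `b(X) / (1 - e(X))` are bounded and
`σ(X)`-measurable, so by the pull-out property each term has zero mean.
-/

open MeasureTheory RealInnerProductSpace

section PullOut

variable {Ω E : Type*} {m mΩ : MeasurableSpace Ω} {μ : Measure Ω}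
  [NormedAddCommGroup E] [NormedSpace ℝ E]

theorem integral_smul_eq_zero_of_condExp_eq_zero [CompleteSpace E] (hm : m ≤ mΩ)
    [SigmaFinite (μ.trim hm)]
    {Z : Ω → ℝ} {g : Ω → E} (hZ : Integrable Z μ) (hZg : Integrable (Z • g) μ)
    (hg : AEStronglyMeasurable[m] g μ) (hZ0 : μ[Z | m] =ᵐ[μ] 0) :
    ∫ ω, Z ω • g ω ∂μ = 0 := by
  have hpull : μ[Z • g | m] =ᵐ[μ] 0 := by
    filter_upwards [condExp_smul_of_aestronglyMeasurable_right hZ hZg hg, hZ0] with ω h h0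
    simp [h, h0]
  calc ∫ ω, Z ω • g ω ∂μ = ∫ ω, μ[Z • g | m] ω ∂μ := (integral_condExp hm).symm
    _ = 0 := by simp [integral_congr_ae hpull]

theorem condExp_const_sub_of_condExp_eq (hm : m ≤ mΩ) [IsFiniteMeasure μ] {T p : Ω → ℝ}
    (hT : Integrable T μ) (hTp : μ[T | m] =ᵐ[μ] p) (c : ℝ) :
    μ[fun ω ↦ c - T ω | m] =ᵐ[μ] fun ω ↦ c - p ω := by
  refine (condExp_sub (integrable_const c) hT m).trans ?_
  rw [condExp_const hm]
  filter_upwards [hTp] with ω hp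
  simp [hp]

theorem condExp_mul_sub_eq_zero [IsFiniteMeasure μ] {T Y f p : Ω → ℝ} {c : ℝ}
    (hT : AEStronglyMeasurable T μ) (hTc : ∀ ω, ‖T ω‖ ≤ c) (hY : Integrable Y μ)
    (hf : StronglyMeasurable[m] f) (hfi : Integrable f μ)
    (hTp : μ[T | m] =ᵐ[μ] p) (hTY : μ[fun ω ↦ T ω * Y ω | m] =ᵐ[μ] fun ω ↦ p ω * f ω) :
    μ[fun ω ↦ T ω * (Y ω - f ω) | m] =ᵐ[μ] 0 := by
  have hTi : Integrable T μ := (integrable_const c).mono' hT (ae_of_all _ hTc)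
  have hTYi : Integrable (fun ω ↦ T ω * Y ω) μ := hY.bdd_mul hT (ae_of_all _ hTc)
  have hfTi : Integrable (f * T) μ := hfi.mul_bdd hT (ae_of_all _ hTc)
  have hsplit : (fun ω ↦ T ω * (Y ω - f ω)) = (fun ω ↦ T ω * Y ω) - f * T := by
    ext ω; simp only [Pi.sub_apply, Pi.mul_apply]; ring
  rw [hsplit]
  filter_upwards [condExp_sub hTYi hfTi m, hTY, condExp_mul_of_stronglyMeasurable_left hf hfTi hTi,
    hTp] with ω h hY' hf' hp
  simp only [h, Pi.sub_apply, hY', hf', Pi.mul_apply, hp, Pi.zero_apply]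
  ring

end PullOut

theorem norm_inv_smul_le {E : Type*} [NormedAddCommGroup E] [NormedSpace ℝ E]
    {ε c K : ℝ} {v : E} (hε : 0 < ε) (hc : ε ≤ c) (hv : ‖v‖ ≤ K) :
    ‖c⁻¹ • v‖ ≤ ε⁻¹ * K := by
  rw [norm_smul, norm_inv, Real.norm_of_nonneg (hε.le.trans hc)]
  exact mul_le_mul (inv_anti₀ hε hc) hv (norm_nonneg v) (inv_nonneg.mpr hε.le)

theorem ipw_mul_residual_eq {a p y m₀ m₁ : ℝ} (ha : a = 0 ∨ a = 1) (hp0 : p ≠ 0) (hp1 : 1 - p ≠ 0) :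
    (a - p) / (p * (1 - p)) * (y - a * m₁ - (1 - a) * m₀)
      = p⁻¹ * (a * (y - m₁)) - (1 - p)⁻¹ * ((1 - a) * (y - m₀)) := by
  rcases ha with rfl | rfl <;> field_simp <;> ring

theorem stronglyMeasurable_comap_inv_smul {Ω E F : Type*} [mE : MeasurableSpace E]
    [NormedAddCommGroup F] [NormedSpace ℝ F] {X : Ω → E} {q : E → ℝ} {b : E → F}
    (hq : Measurable q) (hb : StronglyMeasurable b) :
    StronglyMeasurable[mE.comap X] fun ω ↦ (q (X ω))⁻¹ • b (X ω) :=
  (hq.inv.stronglyMeasurable.smul hb).comp_measurable (comap_measurable X)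

section IPWResidual

variable {Ω E F : Type*} [MeasurableSpace Ω] {P : Measure Ω}
  [mE : MeasurableSpace E] [NormedAddCommGroup F] [NormedSpace ℝ F]
  {X : Ω → E} {T Y : Ω → ℝ} {f q : E → ℝ} {b : E → F} {c ε K : ℝ}

theorem integrable_ipw_residual_smul (hX : Measurable X) (hT : AEStronglyMeasurable T P)
    (hTc : ∀ ω, ‖T ω‖ ≤ c) (hY : Integrable Y P) (hf : Integrable (fun ω ↦ f (X ω)) P)
    (hq : Measurable q) (hε : 0 < ε) (hqε : ∀ x, ε ≤ q x)
    (hb : StronglyMeasurable b) (hbK : ∀ x, ‖b x‖ ≤ K) :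
    Integrable (fun ω ↦ (T ω * (Y ω - f (X ω))) • ((q (X ω))⁻¹ • b (X ω))) P :=
  ((hY.sub hf).bdd_mul hT (ae_of_all _ hTc)).smul_bdd _
    ((stronglyMeasurable_comap_inv_smul hq hb).mono hX.comap_le).aestronglyMeasurable
    (ae_of_all _ fun _ ↦ norm_inv_smul_le hε (hqε _) (hbK _))

theorem integral_ipw_residual_smul_eq_zero [IsFiniteMeasure P] [CompleteSpace F]
    (hX : Measurable X)
    (hT : AEStronglyMeasurable T P) (hTc : ∀ ω, ‖T ω‖ ≤ c) (hY : Integrable Y P)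
    (hf : Measurable f) (hfi : Integrable (fun ω ↦ f (X ω)) P)
    (hq : Measurable q) (hε : 0 < ε) (hqε : ∀ x, ε ≤ q x)
    (hb : StronglyMeasurable b) (hbK : ∀ x, ‖b x‖ ≤ K)
    (hTq : P[T | mE.comap X] =ᵐ[P] fun ω ↦ q (X ω))
    (hTY : P[fun ω ↦ T ω * Y ω | mE.comap X] =ᵐ[P] fun ω ↦ q (X ω) * f (X ω)) :
    ∫ ω, (T ω * (Y ω - f (X ω))) • ((q (X ω))⁻¹ • b (X ω)) ∂P = 0 :=
  integral_smul_eq_zero_of_condExp_eq_zero hX.comap_le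
    ((hY.sub hfi).bdd_mul hT (ae_of_all _ hTc))
    (integrable_ipw_residual_smul hX hT hTc hY hfi hq hε hqε hb hbK)
    (stronglyMeasurable_comap_inv_smul hq hb).aestronglyMeasurable
    (condExp_mul_sub_eq_zero hT hTc hY (hf.comp (comap_measurable X)).stronglyMeasurable hfi
      hTq hTY)

end IPWResidual

theorem dr_second_stage_moment_condition_general
    {Ω : Type*} [MeasurableSpace Ω] (P : Measure Ω) [IsProbabilityMeasure P]
    {E : Type*} [mE : MeasurableSpace E]
    (X : Ω → E) (hX : Measurable X)
    (A : Ω → ℝ) (hA : Measurable A) (hA01 : ∀ ω, A ω = 0 ∨ A ω = 1)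
    (ε : ℝ) (hε0 : 0 < ε)
    (e : E → ℝ) (he : Measurable e) (hebd : ∀ x, ε ≤ e x ∧ e x ≤ 1 - ε)
    (hcondA : P[A | mE.comap X] =ᵐ[P] fun ω => e (X ω))
    (Y : Ω → ℝ) (hY : Integrable Y P)
    (μ0 μ1 : E → ℝ) (hμ0 : Measurable μ0) (hμ1 : Measurable μ1)
    (hμ0i : Integrable (fun ω => μ0 (X ω)) P)
    (hμ1i : Integrable (fun ω => μ1 (X ω)) P)
    (hc1 : P[fun ω => A ω * Y ω | mE.comap X]
        =ᵐ[P] fun ω => e (X ω) * μ1 (X ω))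
    (hc0 : P[fun ω => (1 - A ω) * Y ω | mE.comap X]
        =ᵐ[P] fun ω => (1 - e (X ω)) * μ0 (X ω))
    (d : ℕ)
    (b : E → EuclideanSpace ℝ (Fin d)) (hb : Measurable b)
    (hbbd : ∃ K, ∀ x, ‖b x‖ ≤ K)
    (θ₀ : EuclideanSpace ℝ (Fin d))
    (hspec : ∀ x, μ1 x - μ0 x = ⟪b x, θ₀⟫)
    (ψ : Ω → ℝ)
    (hψ : ∀ ω, ψ ω = μ1 (X ω) - μ0 (X ω) +
      ((A ω - e (X ω)) / (e (X ω) * (1 - e (X ω)))) *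
        (Y ω - A ω * μ1 (X ω) - (1 - A ω) * μ0 (X ω))) :
    ∫ ω, (ψ ω - ⟪b (X ω), θ₀⟫) • b (X ω) ∂P = 0 := by
  obtain ⟨K, hK⟩ := hbbd
  have he0 : ∀ x, ε ≤ e x := fun x ↦ (hebd x).1
  have he1 : ∀ x, ε ≤ 1 - e x := fun x ↦ by linarith [(hebd x).2]
  have hA1 : ∀ ω, ‖A ω‖ ≤ 1 := fun ω ↦ by rcases hA01 ω with h | h <;> simp [h]
  have h1A1 : ∀ ω, ‖1 - A ω‖ ≤ 1 := fun ω ↦ by rcases hA01 ω with h | h <;> simp [h]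
  have hAi : Integrable A P :=
    (integrable_const (1 : ℝ)).mono' hA.aestronglyMeasurable (ae_of_all _ hA1)
  have hpt : ∀ ω, (ψ ω - ⟪b (X ω), θ₀⟫) • b (X ω)
      = (A ω * (Y ω - μ1 (X ω))) • ((e (X ω))⁻¹ • b (X ω))
        - ((1 - A ω) * (Y ω - μ0 (X ω))) • ((1 - e (X ω))⁻¹ • b (X ω)) := by
    intro ω
    rw [hψ, ← hspec, add_sub_cancel_left, ipw_mul_residual_eq (hA01 ω)
      (hε0.trans_le (he0 _)).ne' (hε0.trans_le (he1 _)).ne', sub_smul, smul_smul, smul_smul,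
      mul_comm (e (X ω))⁻¹, mul_comm (1 - e (X ω))⁻¹]
  rw [integral_congr_ae (ae_of_all _ hpt),
    integral_sub
      (integrable_ipw_residual_smul hX hA.aestronglyMeasurable hA1 hY hμ1i he hε0 he0
        hb.stronglyMeasurable hK)
      (integrable_ipw_residual_smul (q := fun x ↦ 1 - e x) hX
        (hA.const_sub 1).aestronglyMeasurable h1A1 hY hμ0i (measurable_const.sub he) hε0 he1
        hb.stronglyMeasurable hK),
    integral_ipw_residual_smul_eq_zero hX hA.aestronglyMeasurable hA1 hY hμ1 hμ1i he hε0 he0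
      hb.stronglyMeasurable hK hcondA hc1,
    integral_ipw_residual_smul_eq_zero (q := fun x ↦ 1 - e x) hX
      (hA.const_sub 1).aestronglyMeasurable h1A1 hY hμ0 hμ0i (measurable_const.sub he) hε0 he1
      hb.stronglyMeasurable hK (condExp_const_sub_of_condExp_eq hX.comap_le hAi hcondA 1) hc0,
    sub_zero]

/-- Second-stage moment condition: under correct linear specification of the
CATE in the feature map `b`, the oracle doubly robust pseudo-outcome satisfies
the population least-squares normal equations at the true second-stage
coefficient `θ₀`. -/
theorem dr_second_stage_moment_condition
    {Ω : Type*} [MeasurableSpace Ω] (P : Measure Ω) [IsProbabilityMeasure P]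
    {E : Type*} [mE : MeasurableSpace E]
    (X : Ω → E) (hX : Measurable X)
    (A : Ω → ℝ) (hA : Measurable A) (hA01 : ∀ ω, A ω = 0 ∨ A ω = 1)
    (ε : ℝ) (hε0 : 0 < ε) (hε12 : ε ≤ 1 / 2)
    (e : E → ℝ) (he : Measurable e) (hebd : ∀ x, ε ≤ e x ∧ e x ≤ 1 - ε)
    (hcondA : P[A | mE.comap X] =ᵐ[P] fun ω => e (X ω))
    (Y : Ω → ℝ) (hY : Integrable Y P)
    (μ0 μ1 : E → ℝ) (hμ0 : Measurable μ0) (hμ1 : Measurable μ1)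
    (hμ0i : Integrable (fun ω => μ0 (X ω)) P)
    (hμ1i : Integrable (fun ω => μ1 (X ω)) P)
    (hc1 : P[fun ω => A ω * Y ω | mE.comap X]
        =ᵐ[P] fun ω => e (X ω) * μ1 (X ω))
    (hc0 : P[fun ω => (1 - A ω) * Y ω | mE.comap X]
        =ᵐ[P] fun ω => (1 - e (X ω)) * μ0 (X ω))
    (d : ℕ) (hd : 1 ≤ d)
    (b : E → EuclideanSpace ℝ (Fin d)) (hb : Measurable b)
    (hbbd : ∃ K, ∀ x, ‖b x‖ ≤ K)
    (θ₀ : EuclideanSpace ℝ (Fin d))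
    (hspec : ∀ x, μ1 x - μ0 x = ⟪b x, θ₀⟫)
    (ψ : Ω → ℝ)
    (hψ : ∀ ω, ψ ω = μ1 (X ω) - μ0 (X ω) +
      ((A ω - e (X ω)) / (e (X ω) * (1 - e (X ω)))) *
        (Y ω - A ω * μ1 (X ω) - (1 - A ω) * μ0 (X ω)))
    (hψi : Integrable ψ P) :
    ∫ ω, (ψ ω - ⟪b (X ω), θ₀⟫) • b (X ω) ∂P = 0 :=
  dr_second_stage_moment_condition_general P (mE := mE) X hX A hA hA01 ε hε0 e he hebd hcondA Y hY
    μ0 μ1 hμ0 hμ1 hμ0i hμ1i hc1 hc0 d b hb hbbd θ₀ hspec ψ hψ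
end
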